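/- arXiv:2203.15264 — 4 statements merged into one kernel-verified Lean document; each statement's English description precedes it below -/
import Mathlib

section
/- Let X be a compact metric space, F = {f_0, …, f_{k−1}} a finite family of continuous surjective self-maps of X, and Σ a subshift over A = {0, …, k−1} with the variable gap length property (SVGL). Suppose there exist σ ∈ Σ and x ∈ X such that O⁺_σ(x) is dense in X. Then the set S = {σ ∈ Σ : there exists x ∈ X with O⁺_σ(x) dense in X} is dense in Σ. -/
/-- `applyWord F u x` is `f_u(x) = f_{u_n} ∘ ⋯ ∘ f_{u_1} (x)` for the word `u = u_1 ⋯ u_n`. -/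
def applyWord {X : Type*} {k : ℕ} (F : Fin k → X → X) : List (Fin k) → X → X
  | [], x => x
  | a :: u, x => applyWord F u (F a x)

/-- The word `u` occurs in the sequence `σ` at position `m`. -/
def occursAt {k : ℕ} (u : List (Fin k)) (σ : ℕ → Fin k) (m : ℕ) : Prop :=
  ∀ i : Fin u.length, u.get i = σ (m + i)

/-- The language of a subshift: words occurring in some point of it. -/
def inLanguage {k : ℕ} (Sub : Set (ℕ → Fin k)) (u : List (Fin k)) : Prop :=
  ∃ σ ∈ Sub, ∃ m : ℕ, occursAt u σ m

/-- A subshift over `Fin k`: a nonempty closed shift-invariant subset of `(Fin k)^ℕ`. -/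
def IsSubshift {k : ℕ} (Sub : Set (ℕ → Fin k)) : Prop :=
  Sub.Nonempty ∧ IsClosed Sub ∧ ∀ σ ∈ Sub, (fun n => σ (n + 1)) ∈ Sub

/-- Subshift of variable gap length: any two words of the language can be connected by a word
of uniformly bounded length. -/
def IsSVGL {k : ℕ} (Sub : Set (ℕ → Fin k)) : Prop :=
  ∃ M : ℕ, ∀ u v : List (Fin k), inLanguage Sub u → inLanguage Sub v →
    ∃ w : List (Fin k), w.length ≤ M ∧ inLanguage Sub (u ++ w ++ v)

/-- The orbit of `x` along `σ`: `O⁺_σ(x) = {x} ∪ {f_{σ_1⋯σ_n}(x) : n ≥ 1}`. -/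
def orbitAlong {X : Type*} {k : ℕ} (F : Fin k → X → X) (σ : ℕ → Fin k) (x : X) : Set X :=
  Set.range fun n : ℕ => applyWord F (List.ofFn fun i : Fin n => σ i) x

lemma applyWord_append {X : Type*} {k : ℕ} (F : Fin k → X → X) (a b : List (Fin k)) (x : X) :
    applyWord F (a ++ b) x = applyWord F b (applyWord F a x) := by
  induction a generalizing x with
  | nil => rfl
  | cons h t ih => simpa only [List.cons_append, applyWord] using ih (F h x)

lemma applyWord_surj {X : Type*} {k : ℕ} (F : Fin k → X → X)
    (hsurj : ∀ i, Function.Surjective (F i)) (l : List (Fin k)) :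
    Function.Surjective (applyWord F l) := by
  induction l with
  | nil => exact fun x => ⟨x, rfl⟩
  | cons a t ih =>
    intro x
    obtain ⟨y, hy⟩ := ih x
    obtain ⟨z, hz⟩ := hsurj a y
    exact ⟨z, by show applyWord F t (F a z) = x; rw [hz, hy]⟩

lemma shift_mem {k : ℕ} {Sub : Set (ℕ → Fin k)} (hSub : IsSubshift Sub) (m : ℕ) :
    ∀ σ ∈ Sub, (fun n => σ (n + m)) ∈ Sub := by
  induction m with
  | zero => simp only [Nat.add_zero]; exact fun σ h => h
  | succ m ih =>
    intro σ hσ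
    have h2 := hSub.2.2 _ (ih σ hσ)
    have : (fun n => σ (n + (m + 1))) = (fun n => σ (n + 1 + m)) := by
      funext n; congr 1; omega
    rw [this]; exact h2

lemma mem_of_approx {k : ℕ} {Sub : Set (ℕ → Fin k)} (hcl : IsClosed Sub) (ρ : ℕ → Fin k)
    (h : ∀ j : ℕ, ∃ t ∈ Sub, ∀ i < j, t i = ρ i) : ρ ∈ Sub := by
  choose t ht hti using h
  have htend : Filter.Tendsto t Filter.atTop (nhds ρ) := by
    rw [tendsto_pi_nhds]
    intro i
    apply Filter.Tendsto.congr' _ tendsto_const_nhds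
    filter_upwards [Filter.eventually_ge_atTop (i + 1)] with j hj
    exact (hti j i hj).symm
  exact hcl.mem_of_tendsto htend (Filter.Eventually.of_forall ht)

/-- If an IFS over an SVGL subshift with surjective maps is point transitive along some
`σ ∈ Σ`, then `S = {σ ∈ Σ : ∃ x, O⁺_σ(x) dense}` is dense in `Σ`. -/
theorem stmt5 {X : Type*} [MetricSpace X] [CompactSpace X] {k : ℕ}
    (F : Fin k → X → X) (hcont : ∀ i, Continuous (F i))
    (hsurj : ∀ i, Function.Surjective (F i))
    (Sub : Set (ℕ → Fin k)) (hSub : IsSubshift Sub) (hSVGL : IsSVGL Sub)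
    (hpt : ∃ σ ∈ Sub, ∃ x : X, Dense (orbitAlong F σ x)) :
    Sub ⊆ closure {σ : ℕ → Fin k | σ ∈ Sub ∧ ∃ x : X, Dense (orbitAlong F σ x)} := by
  obtain ⟨σ₀, hσ₀, x₀, hx₀⟩ := hpt
  obtain ⟨M, hM⟩ := hSVGL
  intro τ hτ
  have key : ∀ n : ℕ, ∃ ρ, (ρ ∈ Sub ∧ ∃ y : X, Dense (orbitAlong F ρ y)) ∧
      ∀ i < n, ρ i = τ i := by
    intro n
    set u : List (Fin k) := List.ofFn (fun i : Fin n => τ i) with hu_def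
    have hulen : u.length = n := List.length_ofFn
    have hu : inLanguage Sub u := by
      refine ⟨τ, hτ, 0, fun i => ?_⟩
      rw [List.get_eq_getElem]
      simp [hu_def, List.getElem_ofFn]
    have hv : ∀ j : ℕ, inLanguage Sub (List.ofFn fun i : Fin j => σ₀ i) := by
      intro j
      refine ⟨σ₀, hσ₀, 0, fun i => ?_⟩
      rw [List.get_eq_getElem]
      simp [List.getElem_ofFn]
    choose w hwlen hwin using fun j => hM u _ hu (hv j)
    haveI : Finite {l : List (Fin k) // l.length ≤ M} :=
      (List.finite_length_le (Fin k) M).to_subtype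
    obtain ⟨w₀, hw₀⟩ := Finite.exists_infinite_fiber
      (fun j : ℕ => (⟨w j, hwlen j⟩ : {l : List (Fin k) // l.length ≤ M}))
    have hw₀' : ((fun j : ℕ => (⟨w j, hwlen j⟩ : {l : List (Fin k) // l.length ≤ M})) ⁻¹'
        {w₀}).Infinite := Set.infinite_coe_iff.mp hw₀
    set W : List (Fin k) := (w₀ : List (Fin k)) with hW_def
    set N : ℕ := n + W.length with hN_def
    have hWlen : (u ++ W).length = N := by simp [hulen, hN_def]
    set ρ : ℕ → Fin k := fun i =>
      if h : i < N then (u ++ W)[i]'(by omega) else σ₀ (i - N) with hρ_def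
    have hfib : ∀ j : ℕ, ∃ j', j ≤ j' ∧ w j' = W := by
      intro j
      obtain ⟨j', hj'mem, hj'⟩ := hw₀'.exists_gt j
      refine ⟨j', le_of_lt hj', ?_⟩
      have := Set.mem_preimage.mp hj'mem
      rw [Set.mem_singleton_iff] at this
      exact congrArg Subtype.val this
    -- ρ ∈ Sub
    have hρSub : ρ ∈ Sub := by
      apply mem_of_approx hSub.2.1
      intro j
      obtain ⟨j', hjj', hwj'⟩ := hfib j
      obtain ⟨s, hs, m, hocc⟩ := hwin j'
      rw [hwj'] at hocc
      refine ⟨fun i => s (i + m), shift_mem hSub m s hs, ?_⟩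
      intro i hi
      have hilen : i < (u ++ W ++ (List.ofFn fun t : Fin j' => σ₀ t)).length := by
        simp [hulen]; omega
      have hocc' := hocc ⟨i, hilen⟩
      rw [List.get_eq_getElem] at hocc'
      simp only at hocc'
      -- hocc' : (u ++ W ++ v)[i] = s (m + i)
      have : ρ i = (u ++ W ++ (List.ofFn fun t : Fin j' => σ₀ t))[i]'hilen := by
        by_cases hiN : i < N
        · have e1 : (u ++ W ++ (List.ofFn fun t : Fin j' => σ₀ t))[i]'hilen
              = (u ++ W)[i]'(by omega) :=
            List.getElem_append_left (by omega)
          rw [e1]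
          simp only [hρ_def, dif_pos hiN]
        · have hNle : (u ++ W).length ≤ i := by omega
          have e1 : (u ++ W ++ (List.ofFn fun t : Fin j' => σ₀ t))[i]'hilen
              = (List.ofFn fun t : Fin j' => σ₀ t)[i - (u ++ W).length]'(by
                  simp only [List.length_append, List.length_ofFn] at hilen ⊢; omega) :=
            List.getElem_append_right hNle
          rw [e1, List.getElem_ofFn]
          simp only [hρ_def, dif_neg hiN, Fin.val_mk, hWlen]
      rw [this, hocc', Nat.add_comm]
    -- ρ starts with τ's prefix
    have hρpre : ∀ i < n, ρ i = τ i := by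
      intro i hi
      have e1 : (u ++ W)[i]'(by omega) = u[i]'(by omega) :=
        List.getElem_append_left (by omega)
      simp only [hρ_def, dif_pos (show i < N by omega)]
      rw [e1]
      simp [hu_def, List.getElem_ofFn]
    -- dense orbit along ρ
    obtain ⟨y, hy⟩ := applyWord_surj F hsurj (u ++ W) x₀
    refine ⟨ρ, ⟨hρSub, y, ?_⟩, hρpre⟩
    apply hx₀.mono
    rintro _ ⟨j, rfl⟩
    refine ⟨N + j, ?_⟩
    have hlist : (List.ofFn fun i : Fin (N + j) => ρ i) =
        (u ++ W) ++ List.ofFn (fun i : Fin j => σ₀ i) := by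
      apply List.ext_getElem
      · simp only [List.length_ofFn, List.length_append]
        omega
      · intro i h1 h2
        rw [List.getElem_ofFn]
        by_cases hiN : i < N
        · have e1 : ((u ++ W) ++ List.ofFn (fun t : Fin j => σ₀ t))[i]'h2
              = (u ++ W)[i]'(by omega) :=
            List.getElem_append_left (by omega)
          rw [e1]
          simp only [hρ_def, Fin.val_mk, dif_pos hiN]
        · have hNle : (u ++ W).length ≤ i := by omega
          have e1 : ((u ++ W) ++ List.ofFn (fun t : Fin j => σ₀ t))[i]'h2
              = (List.ofFn fun t : Fin j => σ₀ t)[i - (u ++ W).length]'(by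
                  simp only [List.length_append, List.length_ofFn] at h2 ⊢; omega) :=
            List.getElem_append_right hNle
          rw [e1, List.getElem_ofFn]
          simp only [hρ_def, Fin.val_mk, dif_neg hiN, hWlen]
    show applyWord F (List.ofFn fun i : Fin (N + j) => ρ ↑i) y
        = applyWord F (List.ofFn fun i : Fin j => σ₀ ↑i) x₀
    rw [hlist, applyWord_append, hy]
  choose ρ hρ hρeq using key
  refine mem_closure_of_tendsto (f := ρ) (b := Filter.atTop) ?_
    (Filter.Eventually.of_forall hρ)
  rw [tendsto_pi_nhds]
  intro i
  apply Filter.Tendsto.congr' _ tendsto_const_nhds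
  filter_upwards [Filter.eventually_ge_atTop (i + 1)] with n hn
  exact (hρeq n i hn).symm
end

section
/- Let X be a compact metric space, F = {f_0, …, f_{k−1}} a finite family of continuous surjective self-maps of X, and Σ a subshift over A = {0, …, k−1} with the variable gap length property (SVGL). Then for every σ ∈ Σ and every x ∈ X, the set {σ′ ∈ Σ : there exists x′ ∈ X with ω_{σ′}(x′) = ω_σ(x)} is dense in Σ, where ω_σ(x) denotes the set of limit points of the sequence (f_{σ_1⋯σ_n}(x))_{n≥1}. -/
/-- The ω-limit set of `x` along `σ`: the set of limit (cluster) points of the sequence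
`(f_{σ_1⋯σ_n}(x))_{n ≥ 1}`. -/
def omegaLimitAlong {X : Type*} [TopologicalSpace X] {k : ℕ}
    (F : Fin k → X → X) (σ : ℕ → Fin k) (x : X) : Set X :=
  {y : X | MapClusterPt y Filter.atTop
    (fun n : ℕ => applyWord F (List.ofFn fun i : Fin (n + 1) => σ i) x)}

namespace Aux7
variable {X : Type*} {k : ℕ}

theorem applyWord_append (F : Fin k → X → X) (a b : List (Fin k)) (x : X) :
    applyWord F (a ++ b) x = applyWord F b (applyWord F a x) := by
  induction a generalizing x with
  | nil => rfl
  | cons hd tl ih => simp [applyWord, ih]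

theorem applyWord_surjective (F : Fin k → X → X) (h : ∀ i, Function.Surjective (F i))
    (u : List (Fin k)) : Function.Surjective (applyWord F u) := by
  induction u with
  | nil => exact fun x => ⟨x, rfl⟩
  | cons hd tl ih =>
    intro y
    obtain ⟨z, hz⟩ := ih y
    obtain ⟨w, hw⟩ := h hd z
    exact ⟨w, by simp [applyWord, hw, hz]⟩

theorem shift_mem {Sub : Set (ℕ → Fin k)} (hSub : IsSubshift Sub) (m : ℕ)
    {σ : ℕ → Fin k} (hσ : σ ∈ Sub) : (fun n => σ (n + m)) ∈ Sub := by
  induction m with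
  | zero => simpa using hσ
  | succ m ih =>
    have h2 := hSub.2.2 _ ih
    have : (fun n => σ (n + (m+1))) = fun n => σ (n + 1 + m) := by
      funext n; congr 1; omega
    rw [this]; exact h2

theorem realize {Sub : Set (ℕ → Fin k)} (hSub : IsSubshift Sub) {u : List (Fin k)}
    (hu : inLanguage Sub u) : ∃ ρ ∈ Sub, ∀ i : Fin u.length, ρ i = u.get i := by
  obtain ⟨σ, hσ, m, hocc⟩ := hu
  refine ⟨fun n => σ (n + m), shift_mem hSub m hσ, fun i => ?_⟩
  show σ (↑i + m) = u.get i
  rw [hocc i, Nat.add_comm]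

theorem inLanguage_mono {Sub : Set (ℕ → Fin k)} {a c : List (Fin k)} (h : inLanguage Sub c)
    (hlen : a.length ≤ c.length)
    (hag : ∀ i (hi : i < a.length), a.get ⟨i, hi⟩ = c.get ⟨i, lt_of_lt_of_le hi hlen⟩) :
    inLanguage Sub a := by
  obtain ⟨σ, hσ, m, hocc⟩ := h
  refine ⟨σ, hσ, m, fun i => ?_⟩
  rw [hag i i.2]
  exact hocc ⟨i, lt_of_lt_of_le i.2 hlen⟩

/-- concatenation of a finite word and an infinite sequence -/
def cat (p : List (Fin k)) (σ : ℕ → Fin k) : ℕ → Fin k :=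
  fun n => if h : n < p.length then p.get ⟨n, h⟩ else σ (n - p.length)

theorem ofFn_cat (p : List (Fin k)) (σ : ℕ → Fin k) (m : ℕ) :
    List.ofFn (fun i : Fin (p.length + m) => cat p σ i) =
      p ++ List.ofFn (fun i : Fin m => σ i) := by
  apply List.ext_getElem
  · simp
  · intro i h1 h2
    simp only [List.getElem_ofFn, List.getElem_append, cat]
    by_cases hi : i < p.length
    · simp [hi]
    · simp [hi]

theorem cat_mem {Sub : Set (ℕ → Fin k)} (hSub : IsSubshift Sub) (p : List (Fin k))
    {σ : ℕ → Fin k}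
    (h : ∀ n, inLanguage Sub (p ++ List.ofFn (fun i : Fin n => σ i))) :
    cat p σ ∈ Sub := by
  have key : ∀ n, ∃ ρ ∈ Sub, ∀ i, i < p.length + n → ρ i = cat p σ i := by
    intro n
    obtain ⟨ρ, hρ, hag⟩ := realize hSub (h n)
    rw [← ofFn_cat p σ n] at hag
    refine ⟨ρ, hρ, fun i hi => ?_⟩
    have := hag ⟨i, by simpa using hi⟩
    simpa using this
  choose ρ hρ hag using key
  have htend : Filter.Tendsto ρ Filter.atTop (nhds (cat p σ)) := by
    rw [tendsto_pi_nhds]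
    intro i
    apply Filter.Tendsto.congr' _ tendsto_const_nhds
    filter_upwards [Filter.eventually_ge_atTop (i + 1)] with n hn
    exact (hag n i (by omega)).symm
  exact hSub.2.1.mem_of_tendsto htend (Filter.Eventually.of_forall hρ)

theorem ofFn_cat' (p : List (Fin k)) (σ : ℕ → Fin k) (N : ℕ) (hN : p.length ≤ N) :
    List.ofFn (fun i : Fin N => cat p σ i) =
      p ++ List.ofFn (fun i : Fin (N - p.length) => σ i) := by
  apply List.ext_getElem
  · simp; omega
  · intro i h1 h2
    simp only [List.getElem_ofFn, List.getElem_append, cat]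
    by_cases hi : i < p.length
    · simp [hi]
    · simp [hi]

theorem omega_cat [TopologicalSpace X] (F : Fin k → X → X) (p : List (Fin k)) (σ : ℕ → Fin k)
    {x x' : X} (hx : applyWord F p x' = x) :
    omegaLimitAlong F (cat p σ) x' = omegaLimitAlong F σ x := by
  have hg : ∀ m : ℕ, applyWord F (List.ofFn fun i : Fin (m + p.length + 1) => cat p σ i) x'
      = applyWord F (List.ofFn fun i : Fin (m + 1) => σ i) x := by
    intro m
    rw [ofFn_cat' p σ (m + p.length + 1) (by omega)]
    have e : m + p.length + 1 - p.length = m + 1 := by omega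
    rw [e, applyWord_append, hx]
  have hmap : Filter.map
        (fun n => applyWord F (List.ofFn fun i : Fin (n + 1) => cat p σ i) x') Filter.atTop
      = Filter.map (fun n => applyWord F (List.ofFn fun i : Fin (n + 1) => σ i) x)
        Filter.atTop := by
    conv_lhs => rw [← Filter.map_add_atTop_eq_nat p.length, Filter.map_map]
    congr 1
    funext m
    exact hg m
  ext y
  simp only [omegaLimitAlong, Set.mem_setOf_eq, MapClusterPt]
  rw [hmap]

end Aux7

open Aux7

/-- Over an SVGL subshift with surjective maps, for every `σ ∈ Σ` and `x ∈ X` the set of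
`σ' ∈ Σ` realizing the same ω-limit set along some point is dense in `Σ`. -/
theorem stmt7 {X : Type*} [MetricSpace X] [CompactSpace X] {k : ℕ}
    (F : Fin k → X → X) (hcont : ∀ i, Continuous (F i))
    (hsurj : ∀ i, Function.Surjective (F i))
    (Sub : Set (ℕ → Fin k)) (hSub : IsSubshift Sub) (hSVGL : IsSVGL Sub) :
    ∀ σ ∈ Sub, ∀ x : X,
      Sub ⊆ closure {σ' : ℕ → Fin k | σ' ∈ Sub ∧
        ∃ x' : X, omegaLimitAlong F σ' x' = omegaLimitAlong F σ x} := by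
  intro σ hσ x τ hτ
  obtain ⟨M, hM⟩ := hSVGL
  have key : ∀ n : ℕ, ∃ ρ, ρ ∈ Sub ∧ (∀ i, i < n → ρ i = τ i) ∧
      ∃ x', omegaLimitAlong F ρ x' = omegaLimitAlong F σ x := by
    intro n
    set u : List (Fin k) := List.ofFn (fun i : Fin n => τ i) with hu_def
    have hu : inLanguage Sub u := ⟨τ, hτ, 0, fun i => by simp [hu_def]⟩
    have hex : ∀ m : ℕ, ∃ w, w.length ≤ M ∧
        inLanguage Sub (u ++ w ++ List.ofFn (fun i : Fin m => σ i)) :=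
      fun m => hM u _ hu ⟨σ, hσ, 0, fun i => by simp⟩
    choose W hWlen hWlang using hex
    haveI : Finite {l : List (Fin k) | l.length ≤ M} := (List.finite_length_le (Fin k) M).to_subtype
    obtain ⟨⟨w, hwlen⟩, hwinf⟩ := Finite.exists_infinite_fiber
      (fun m => (⟨W m, hWlen m⟩ : {l : List (Fin k) | l.length ≤ M}))
    replace hwinf := Set.infinite_coe_iff.mp hwinf
    set q : List (Fin k) := u ++ w with hq_def
    have hall : ∀ m : ℕ, inLanguage Sub (q ++ List.ofFn (fun i : Fin m => σ i)) := by
      intro m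
      obtain ⟨m', hm'mem, hm'⟩ := hwinf.exists_gt m
      have hWm' : W m' = w := by
        have h := hm'mem
        simp only [Set.mem_preimage, Set.mem_singleton_iff] at h
        exact congrArg Subtype.val h
      have hc : inLanguage Sub (List.ofFn (fun i : Fin (q.length + m') => cat q σ i)) := by
        rw [ofFn_cat]
        have := hWlang m'
        rw [hWm'] at this
        exact this
      have hres := inLanguage_mono
        (a := List.ofFn (fun i : Fin (q.length + m) => cat q σ i)) hc
        (by simp; omega)
        (fun i hi => by simp [List.get_ofFn])
      rw [ofFn_cat] at hres
      exact hres
    have hmem : cat q σ ∈ Sub := cat_mem hSub q hall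
    obtain ⟨x', hx'⟩ := applyWord_surjective F hsurj q x
    refine ⟨cat q σ, hmem, ?_, x', omega_cat F q σ hx'⟩
    intro i hi
    have hiu : i < u.length := by simp [hu_def]; omega
    have hiq : i < q.length := by simp [hq_def]; omega
    show cat q σ i = τ i
    simp only [cat, dif_pos hiq]
    rw [List.get_eq_getElem]
    show (u ++ w)[i]'(by simpa [hq_def] using hiq) = τ i
    rw [List.getElem_append_left hiu]
    simp [hu_def]
  choose ρ hρmem hρag x' hρx using key
  refine mem_closure_of_tendsto (b := Filter.atTop) ?_
    (Filter.Eventually.of_forall fun n => ⟨hρmem n, x' n, hρx n⟩)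
  rw [tendsto_pi_nhds]
  intro i
  apply Filter.Tendsto.congr' _ tendsto_const_nhds
  filter_upwards [Filter.eventually_ge_atTop (i + 1)] with n hn
  exact (hρag n i (by omega)).symm
end

section
/- Let X = {0,1}^ℕ with the product topology, and for a ∈ {0,1} define f_a : X → X by f_a(ξ) = aξ (prepending the symbol a). Let V = {ξ ∈ X : ξ_1ξ_2ξ_3 = 100}. Then for every σ ∈ {0,1}^ℕ and every nonempty open set U ⊆ X, there are infinitely many n with f_{σ_1⋯σ_n}(U) ∩ V = ∅; in particular, the IFS is not mixing along any orbit σ. -/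
/-- Prepend the symbol `a` to the sequence `ξ`. -/
def prepend (a : Fin 2) (ξ : ℕ → Fin 2) : ℕ → Fin 2
  | 0 => a
  | n + 1 => ξ n

/-- Prepend a whole list. -/
def prependList : List (Fin 2) → (ℕ → Fin 2) → ℕ → Fin 2
  | [], ξ => ξ
  | a :: l, ξ => prepend a (prependList l ξ)

lemma prependList_append (l : List (Fin 2)) (a : Fin 2) (ξ : ℕ → Fin 2) :
    prependList (l ++ [a]) ξ = prependList l (prepend a ξ) := by
  induction l with
  | nil => rfl
  | cons b l ih => simp [prependList, ih]

lemma applyWord_eq (u : List (Fin 2)) (ξ : ℕ → Fin 2) :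
    applyWord (fun a : Fin 2 => prepend a) u ξ = prependList u.reverse ξ := by
  induction u generalizing ξ with
  | nil => rfl
  | cons a u ih =>
      simp only [applyWord, List.reverse_cons, ih, prependList_append]

lemma prependList_get (l : List (Fin 2)) (ξ : ℕ → Fin 2) (j : ℕ) (h : j < l.length) :
    prependList l ξ j = l[j] := by
  induction l generalizing j with
  | nil => simp at h
  | cons a l ih =>
      cases j with
      | zero => rfl
      | succ j =>
          simp only [prependList, prepend]
          rw [ih j (by simpa using h)]
          simp

lemma image_val (σ : ℕ → Fin 2) (n : ℕ) (ξ : ℕ → Fin 2) (j : ℕ) (h : j < n) :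
    applyWord (fun a : Fin 2 => prepend a) (List.ofFn fun i : Fin n => σ i) ξ j
      = σ (n - 1 - j) := by
  rw [applyWord_eq, prependList_get _ _ _ (by simpa using h), List.getElem_reverse]
  simp

/-- For the prepending IFS on `{0,1}^ℕ` and the cylinder `V = [100]`, along any `σ` and for any
nonempty open `U` there are infinitely many `n` with `f_{σ_1⋯σ_n}(U) ∩ V = ∅`; in particular
the IFS is not mixing along any orbit. -/
theorem stmt9 :
    ∀ σ : ℕ → Fin 2, ∀ U : Set (ℕ → Fin 2), IsOpen U → U.Nonempty →
      ∀ N : ℕ, ∃ n : ℕ, N ≤ n ∧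
        ((applyWord (fun a : Fin 2 => prepend a) (List.ofFn fun i : Fin n => σ i)) '' U) ∩
          {ξ : ℕ → Fin 2 | ξ 0 = 1 ∧ ξ 1 = 0 ∧ ξ 2 = 0} = ∅ := by
  intro σ U _ _ N
  set m := max N 3 with hm
  have hm3 : 3 ≤ m := le_max_right _ _
  have hmN : N ≤ m := le_max_left _ _
  by_cases h : σ (m - 1) = 1 ∧ σ (m - 2) = 0 ∧ σ (m - 3) = 0
  · refine ⟨m + 1, by omega, ?_⟩
    ext y
    simp only [Set.mem_inter_iff, Set.mem_image, Set.mem_setOf_eq, Set.mem_empty_iff_false,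
      iff_false, not_and]
    rintro ⟨ξ, -, rfl⟩ h0 h1 h2
    rw [image_val σ (m + 1) ξ 1 (by omega)] at h1
    have : m + 1 - 1 - 1 = m - 1 := by omega
    rw [this, h.1] at h1
    exact absurd h1 (by decide)
  · refine ⟨m, by omega, ?_⟩
    ext y
    simp only [Set.mem_inter_iff, Set.mem_image, Set.mem_setOf_eq, Set.mem_empty_iff_false,
      iff_false, not_and]
    rintro ⟨ξ, -, rfl⟩ h0 h1 h2
    rw [image_val σ m ξ 0 (by omega)] at h0
    rw [image_val σ m ξ 1 (by omega)] at h1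
    rw [image_val σ m ξ 2 (by omega)] at h2
    exact h ⟨by simpa using h0, by
      have : m - 1 - 1 = m - 2 := by omega
      rwa [this] at h1, by
      have : m - 1 - 2 = m - 3 := by omega
      rwa [this] at h2⟩
end

section
/- Let X = {0,1}^ℕ with the product topology, for i ∈ {0,1} define f_i : X → X by f_i(ζ) = iζ if ζ_1 = i and f_i(ζ) = ζ_2ζ_3⋯ otherwise, and for ζ ∈ X let ζ* denote its bitwise complement (ζ*_n = 1 − ζ_n). Then for every ζ ∈ X and every n ≥ 1, f_{ζ*_1⋯ζ*_n}(ζ) = τ^n(ζ), where τ is the shift; consequently, if ζ has dense orbit under the shift τ, then the orbit of ζ along ζ*, namely {f_{ζ*_1⋯ζ*_n}(ζ) : n ≥ 1}, is dense in X. -/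
/-- `f_i(ζ) = iζ` if `ζ_1 = i`, and `f_i(ζ) = ζ_2ζ_3⋯` otherwise. -/
def pushPop (i : Fin 2) (ζ : ℕ → Fin 2) : ℕ → Fin 2 :=
  if ζ 0 = i then prepend i ζ else fun n => ζ (n + 1)

/-- The shift map on one-sided binary sequences. -/
def shiftMap (ζ : ℕ → Fin 2) : ℕ → Fin 2 := fun n => ζ (n + 1)

/-- The bitwise complement of a binary sequence. -/
def star (ζ : ℕ → Fin 2) : ℕ → Fin 2 := fun n => if ζ n = 0 then 1 else 0

lemma shiftMap_iter (ζ : ℕ → Fin 2) (m k : ℕ) : shiftMap^[m] ζ k = ζ (m + k) := by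
  induction m generalizing ζ k with
  | zero => simp
  | succ m ih =>
    rw [Function.iterate_succ_apply, ih]
    simp [shiftMap]
    ring_nf

lemma star_ne (ζ : ℕ → Fin 2) (n : ℕ) : ζ n ≠ _root_.star ζ n := by
  by_cases h : ζ n = 0 <;> simp [_root_.star, h]

lemma nebot (ζ : ℕ → Fin 2) : Filter.NeBot (nhdsWithin ζ {ζ}ᶜ) := by
  rw [← mem_closure_iff_nhdsWithin_neBot]
  have htend : Filter.Tendsto (fun k : ℕ => Function.update ζ k (_root_.star ζ k))
      Filter.atTop (nhds ζ) := by
    rw [tendsto_pi_nhds]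
    intro j
    apply Filter.Tendsto.congr' (f₁ := fun _ => ζ j)
    · filter_upwards [Filter.eventually_gt_atTop j] with k hk
      rw [Function.update_of_ne (by omega)]
    · exact tendsto_const_nhds
  refine mem_closure_of_tendsto htend ?_
  filter_upwards with k
  intro h
  have : Function.update ζ k (_root_.star ζ k) k = ζ k := by rw [Set.mem_singleton_iff.mp h]
  rw [Function.update_self] at this
  exact star_ne ζ k this.symm

lemma key (ζ : ℕ → Fin 2) : ∀ n m : ℕ,
    applyWord pushPop (List.ofFn fun i : Fin n => _root_.star ζ (m + i)) (shiftMap^[m] ζ)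
      = shiftMap^[m + n] ζ := by
  intro n
  induction n with
  | zero => intro m; simp [applyWord]
  | succ n ih =>
    intro m
    rw [List.ofFn_succ]
    show applyWord pushPop _ (pushPop (_root_.star ζ (m + ↑(0 : Fin (n+1)))) (shiftMap^[m] ζ)) = _
    have h0 : (shiftMap^[m] ζ) 0 = ζ m := by rw [shiftMap_iter, Nat.add_zero]
    have : pushPop (_root_.star ζ (m + ↑(0 : Fin (n+1)))) (shiftMap^[m] ζ) = shiftMap^[m+1] ζ := by
      unfold pushPop
      rw [if_neg]
      · funext k
        rw [shiftMap_iter, shiftMap_iter]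
        ring_nf
      · simp only [Fin.val_zero, Nat.add_zero, h0]
        exact star_ne ζ m
    rw [this]
    have : (List.ofFn fun i : Fin n => _root_.star ζ (m + ↑(i.succ)))
        = List.ofFn fun i : Fin n => _root_.star ζ (m + 1 + ↑i) := by
      congr 1
      funext i
      congr 1
      simp [Fin.val_succ]
      ring
    rw [this, ih (m + 1)]
    congr 1
    ring

/-- Along the complement `ζ*`, the `pushPop` maps act on `ζ` as the shift:
`f_{ζ*_1⋯ζ*_n}(ζ) = τ^n(ζ)`; consequently a shift-transitive point `ζ` has dense orbit
along `ζ*`. -/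
theorem stmt11 :
    (∀ ζ : ℕ → Fin 2, ∀ n : ℕ, 1 ≤ n →
      applyWord pushPop (List.ofFn fun i : Fin n => star ζ i) ζ = shiftMap^[n] ζ) ∧
    ∀ ζ : ℕ → Fin 2, Dense (Set.range fun n : ℕ => shiftMap^[n] ζ) →
      Dense {y : ℕ → Fin 2 | ∃ n : ℕ, 1 ≤ n ∧
        applyWord pushPop (List.ofFn fun i : Fin n => star ζ i) ζ = y} := by
  have main : ∀ ζ : ℕ → Fin 2, ∀ n : ℕ,
      applyWord pushPop (List.ofFn fun i : Fin n => star ζ i) ζ = shiftMap^[n] ζ := by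
    intro ζ n
    have := key ζ n 0
    simpa using this
  constructor
  · intro ζ n _; exact main ζ n
  · intro ζ hd
    have h1 : Dense ((Set.range fun n : ℕ => shiftMap^[n] ζ) \ {ζ}) :=
      have := nebot ζ
      hd.diff_singleton ζ
    refine h1.mono ?_
    rintro y ⟨⟨n, rfl⟩, hy⟩
    have hn : 1 ≤ n := by
      rcases Nat.eq_zero_or_pos n with h | h
      · exfalso; apply hy; simp [h]
      · exact h
    exact ⟨n, hn, main ζ n⟩
end
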